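/- arXiv:2309.13062 — 6 statements merged into one kernel-verified Lean document; each statement's English description precedes it below -/
import Mathlib

section
/- Let (X,ρ) be a metric space, A, B ⊆ X, C a set, P ⊆ A × B × C², f_A, f_B : C → ℝ, and suppose (A,B) ∈ CD_X^P(f_A, f_B). Let {x_n}, {z_n} ⊆ A and {y_n} ⊆ B satisfy lim_{k→∞} sup_{n≥k,m≥k} ρ(x_n, y_m) = dist(A,B) and lim_{k→∞} sup_{n≥k,m≥k} ρ(z_n, y_m) = dist(A,B), and suppose there exist sequences {u_n}, {v_n}, {t_n} ⊆ C with (x_n, y_m, u_n, v_m) ∈ P and (z_n, y_m, t_n, v_m) ∈ P for all n, m, lim f_A(u_n) = inf_C f_A, lim f_B(v_n) = inf_C f_B, and lim f_A(t_n) = inf_C f_A. Then there exists α ∈ A with lim x_n = lim z_n = α. -/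
open Filter

/-- dist(A,B) = inf {ρ(a,b) : a ∈ A, b ∈ B} -/
noncomputable def setDist {X : Type*} [MetricSpace X] (A B : Set X) : ℝ :=
  sInf (Set.image2 dist A B)

/-- sup_{n≥k, m≥k} ρ(x n, y m) -/
noncomputable def supDist {X : Type*} [MetricSpace X] (x y : ℕ → X) (k : ℕ) : ℝ :=
  sSup {d : ℝ | ∃ n m, k ≤ n ∧ k ≤ m ∧ d = dist (x n) (y m)}

/-- The property CD_X^P(f_A, f_B) of the pair (A,B). -/
def CDP {X C : Type*} [MetricSpace X] (A B : Set X) (P : Set (X × X × C × C))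
    (fA fB : C → ℝ) : Prop :=
  ∀ (x y : ℕ → X) (u v : ℕ → C),
    (∀ n, x n ∈ A) → (∀ n, y n ∈ B) →
    Tendsto (supDist x y) atTop (nhds (setDist A B)) →
    (∀ n m, (x n, y m, u n, v m) ∈ P) →
    Tendsto (fun n => fA (u n)) atTop (nhds (⨅ c, fA c)) →
    Tendsto (fun n => fB (v n)) atTop (nhds (⨅ c, fB c)) →
    ∃ a ∈ A, Tendsto x atTop (nhds a)

/-- The iterated sequences of (T,H) with initial guess p:
x_{n+1} = T(x_n, u_n), u_{n+1} = H(x_n, u_n). -/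
def iterSeq {X C : Type*} (T : X → C → X) (H : X → C → C) (p : X × C) : ℕ → X × C
  | 0 => p
  | n + 1 => (T (iterSeq T H p n).1 (iterSeq T H p n).2,
              H (iterSeq T H p n).1 (iterSeq T H p n).2)

/-- (T_A,T_B,H_A,H_B,f_A,f_B) ∈ CEF_C^P(A,B): a contraction map set with an
external factor about (A,B,C) in P. -/
def CEF {X C : Type*} [MetricSpace X] (A B : Set X) (P : Set (X × X × C × C))
    (TA TB : X → C → X) (HA HB : X → C → C) (fA fB : C → ℝ) : Prop :=
  -- C-1: P-invariance of the iterated sequences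
  (∀ q ∈ P, ∀ n m : ℕ,
      ((iterSeq TA HA (q.1, q.2.2.1) n).1,
       (iterSeq TB HB (q.2.1, q.2.2.2) m).1,
       (iterSeq TA HA (q.1, q.2.2.1) n).2,
       (iterSeq TB HB (q.2.1, q.2.2.2) m).2) ∈ P) ∧
  -- C-2: the infima of f_A and f_B are finite
  BddBelow (Set.range fA) ∧ BddBelow (Set.range fB) ∧
  -- C-3: the contraction condition
  (∃ lam : ℝ, 0 ≤ lam ∧ lam < 1 ∧ ∀ q ∈ P,
      dist (TA q.1 q.2.2.1) (TB q.2.1 q.2.2.2)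
        + fA (HA q.1 q.2.2.1) + fB (HB q.2.1 q.2.2.2) ≤
      lam * (dist q.1 q.2.1 + fA q.2.2.1 + fB q.2.2.2)
        + (1 - lam) * (setDist A B + (⨅ c, fA c) + (⨅ c, fB c)))

private lemma half_tendsto : Tendsto (fun n : ℕ => n / 2) atTop atTop := by
  apply tendsto_atTop_atTop.mpr
  intro b
  exact ⟨2 * b, fun n hn => by omega⟩

private lemma interleave_tendsto {Y : Type*} [TopologicalSpace Y] {f g : ℕ → Y} {l : Y}
    (hf : Tendsto f atTop (nhds l)) (hg : Tendsto g atTop (nhds l)) :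
    Tendsto (fun n => if n % 2 = 0 then f (n / 2) else g (n / 2)) atTop (nhds l) := by
  rw [Filter.tendsto_def]
  intro s hs
  have h1 : (fun n : ℕ => f (n / 2)) ⁻¹' s ∈ atTop :=
    Filter.tendsto_def.mp (hf.comp half_tendsto) s hs
  have h2 : (fun n : ℕ => g (n / 2)) ⁻¹' s ∈ atTop :=
    Filter.tendsto_def.mp (hg.comp half_tendsto) s hs
  filter_upwards [h1, h2] with n hn1 hn2
  simp only [Set.mem_preimage] at *
  split <;> assumption

/-- {c_n} ∈ IS_f^P(a, y, v): an infimum sequence of a on f and (y,v) in P. -/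
def ISseq {X C : Type*} (P : Set (X × X × C × C)) (f : C → ℝ)
    (a y : X) (v : C) (c : ℕ → C) : Prop :=
  Tendsto (fun n => f (c n)) atTop (nhds (⨅ d, f d)) ∧ ∀ n, (a, y, c n, v) ∈ P

theorem stmt_7 {X C : Type*} [MetricSpace X] [Nonempty C] (A B : Set X)
    (P : Set (X × X × C × C)) (fA fB : C → ℝ)
    (hP : ∀ q ∈ P, q.1 ∈ A ∧ q.2.1 ∈ B)
    (hCD : CDP A B P fA fB)
    (x z y : ℕ → X) (hx : ∀ n, x n ∈ A) (hz : ∀ n, z n ∈ A) (hy : ∀ n, y n ∈ B)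
    (hxy : Tendsto (supDist x y) atTop (nhds (setDist A B)))
    (hzy : Tendsto (supDist z y) atTop (nhds (setDist A B)))
    (u v t : ℕ → C)
    (hu : ∀ n m, (x n, y m, u n, v m) ∈ P)
    (ht : ∀ n m, (z n, y m, t n, v m) ∈ P)
    (hfu : Tendsto (fun n => fA (u n)) atTop (nhds (⨅ c, fA c)))
    (hfv : Tendsto (fun n => fB (v n)) atTop (nhds (⨅ c, fB c)))
    (hft : Tendsto (fun n => fA (t n)) atTop (nhds (⨅ c, fA c))) :
    ∃ a ∈ A, Tendsto x atTop (nhds a) ∧ Tendsto z atTop (nhds a) := by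
  classical
  set D : ℝ := setDist A B with hD
  -- interleaved sequences
  set w : ℕ → X := fun n => if n % 2 = 0 then x (n / 2) else z (n / 2) with hw
  set c : ℕ → C := fun n => if n % 2 = 0 then u (n / 2) else t (n / 2) with hc
  have hwA : ∀ n, w n ∈ A := by
    intro n; simp only [hw]; split
    · exact hx _
    · exact hz _
  have hwP : ∀ n m, (w n, y m, c n, v m) ∈ P := by
    intro n m
    by_cases h : n % 2 = 0 <;> simp only [hw, hc, if_pos, if_neg, h, if_true, if_false]
    · exact hu _ _
    · exact ht _ _
  have hfc : Tendsto (fun n => fA (c n)) atTop (nhds (⨅ c, fA c)) := by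
    have := interleave_tendsto (f := fun n => fA (u n)) (g := fun n => fA (t n)) hfu hft
    refine this.congr fun n => ?_
    by_cases h : n % 2 = 0 <;> simp [hc, h]
  -- the three sets of distances
  set S : ℕ → Set ℝ :=
    fun k => {d : ℝ | ∃ n m, k ≤ n ∧ k ≤ m ∧ d = dist (w n) (y m)} with hS
  set T : ℕ → Set ℝ :=
    fun k => {d : ℝ | ∃ n m, k ≤ n ∧ k ≤ m ∧ d = dist (x n) (y m)} with hT
  set U : ℕ → Set ℝ :=
    fun k => {d : ℝ | ∃ n m, k ≤ n ∧ k ≤ m ∧ d = dist (z n) (y m)} with hU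
  have hsupS : supDist w y = fun k => sSup (S k) := rfl
  have hsupT : supDist x y = fun k => sSup (T k) := rfl
  have hsupU : supDist z y = fun k => sSup (U k) := rfl
  have hw2 : ∀ n, w (2 * n) = x n := by
    intro n; simp only [hw]
    rw [if_pos (by omega)]
    congr 1; omega
  have hw2' : ∀ n, w (2 * n + 1) = z n := by
    intro n; simp only [hw]
    rw [if_neg (by omega)]
    congr 1; omega
  have hSanti : ∀ k k', k ≤ k' → S k' ⊆ S k := by
    rintro k k' hk d ⟨n, m, hn, hm, rfl⟩
    exact ⟨n, m, le_trans hk hn, le_trans hk hm, rfl⟩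
  have hTanti : ∀ k k', k ≤ k' → T k' ⊆ T k := by
    rintro k k' hk d ⟨n, m, hn, hm, rfl⟩
    exact ⟨n, m, le_trans hk hn, le_trans hk hm, rfl⟩
  have hUanti : ∀ k k', k ≤ k' → U k' ⊆ U k := by
    rintro k k' hk d ⟨n, m, hn, hm, rfl⟩
    exact ⟨n, m, le_trans hk hn, le_trans hk hm, rfl⟩
  have hTS : ∀ k, T k ⊆ S k := by
    rintro k d ⟨n, m, hn, hm, rfl⟩
    exact ⟨2 * n, m, by omega, hm, by rw [hw2]⟩
  have hUS : ∀ k, U k ⊆ S k := by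
    rintro k d ⟨n, m, hn, hm, rfl⟩
    exact ⟨2 * n + 1, m, by omega, hm, by rw [hw2']⟩
  have hSTU : ∀ k, S k ⊆ T (k / 2) ∪ U (k / 2) := by
    rintro k d ⟨n, m, hn, hm, rfl⟩
    by_cases h : n % 2 = 0
    · left
      refine ⟨n / 2, m, by omega, by omega, ?_⟩
      simp only [hw, if_pos h]
    · right
      refine ⟨n / 2, m, by omega, by omega, ?_⟩
      simp only [hw, if_neg h]
  have hSne : ∀ k, (S k).Nonempty := fun k => ⟨_, k, k, le_refl k, le_refl k, rfl⟩
  have hDle : ∀ a ∈ A, ∀ b ∈ B, D ≤ dist a b := by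
    intro a ha b hb
    refine csInf_le ⟨0, ?_⟩ ⟨a, ha, b, hb, rfl⟩
    rintro d ⟨a', _, b', _, rfl⟩
    exact dist_nonneg
  -- main step: supDist w y tends to D
  have hsd : Tendsto (supDist w y) atTop (nhds D) := by
    by_cases hbdd : ∃ k0, BddAbove (S k0)
    · obtain ⟨k0, hb0⟩ := hbdd
      have hbS : ∀ j, k0 ≤ j → BddAbove (S j) := fun j hj => hb0.mono (hSanti _ _ hj)
      have hbT : ∀ j, k0 ≤ j → BddAbove (T j) :=
        fun j hj => (hbS j hj).mono (hTS j)
      have hbU : ∀ j, k0 ≤ j → BddAbove (U j) :=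
        fun j hj => (hbS j hj).mono (hUS j)
      have hg : Tendsto (fun j => max (supDist x y (j / 2)) (supDist z y (j / 2)))
          atTop (nhds D) := by
        have := (hxy.comp half_tendsto).max (hzy.comp half_tendsto)
        rwa [max_self] at this
      refine tendsto_of_tendsto_of_tendsto_of_le_of_le' tendsto_const_nhds hg ?_ ?_
      · filter_upwards [eventually_ge_atTop k0] with j hj
        have h1 : D ≤ dist (w j) (y j) := hDle _ (hwA j) _ (hy j)
        have h2 : dist (w j) (y j) ≤ sSup (S j) :=
          le_csSup (hbS j hj) ⟨j, j, le_refl j, le_refl j, rfl⟩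
        exact le_trans h1 h2
      · filter_upwards [eventually_ge_atTop (2 * k0)] with j hj
        have hj2 : k0 ≤ j / 2 := by omega
        rw [hsupS, hsupT, hsupU]
        refine csSup_le (hSne j) ?_
        intro d hd
        rcases hSTU j hd with h | h
        · exact le_max_of_le_left (le_csSup (hbT _ hj2) h)
        · exact le_max_of_le_right (le_csSup (hbU _ hj2) h)
    · push_neg at hbdd
      have hS0 : ∀ k, sSup (S k) = 0 := fun k => Real.sSup_of_not_bddAbove (hbdd k)
      have hTU : ∀ k, ¬BddAbove (T k) ∨ ¬BddAbove (U k) := by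
        intro k
        by_contra h
        push_neg at h
        have : BddAbove (S (2 * k)) := by
          refine (h.1.union h.2).mono ?_
          have := hSTU (2 * k)
          rwa [show 2 * k / 2 = k by omega] at this
        exact hbdd _ this
      have hD0 : D = 0 := by
        by_cases hTb : ∀ k, ¬BddAbove (T k)
        · have : Tendsto (supDist x y) atTop (nhds 0) := by
            rw [hsupT]
            have : (fun k => sSup (T k)) = fun _ => (0 : ℝ) := by
              funext k; exact Real.sSup_of_not_bddAbove (hTb k)
            rw [this]; exact tendsto_const_nhds
          exact tendsto_nhds_unique hxy this
        · push_neg at hTb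
          obtain ⟨k1, hk1⟩ := hTb
          have hUb : ∀ k, k1 ≤ k → ¬BddAbove (U k) := by
            intro k hk
            rcases hTU k with h | h
            · exact absurd (hk1.mono (hTanti _ _ hk)) h
            · exact h
          have : Tendsto (supDist z y) atTop (nhds 0) := by
            refine Tendsto.congr' ?_ (tendsto_const_nhds : Tendsto (fun _ : ℕ => (0:ℝ)) atTop (nhds 0))
            filter_upwards [eventually_ge_atTop k1] with k hk
            exact (Real.sSup_of_not_bddAbove (hUb k hk)).symm
          exact tendsto_nhds_unique hzy this
      rw [hsupS, hD0]
      have : (fun k => sSup (S k)) = fun _ => (0 : ℝ) := funext hS0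
      rw [this]
      exact tendsto_const_nhds
  obtain ⟨a, haA, haw⟩ := hCD w y c v hwA hy hsd hwP hfc hfv
  have h2n : Tendsto (fun n : ℕ => 2 * n) atTop atTop :=
    tendsto_atTop_atTop.mpr fun b => ⟨b, fun n hn => by omega⟩
  have h2n1 : Tendsto (fun n : ℕ => 2 * n + 1) atTop atTop :=
    tendsto_atTop_atTop.mpr fun b => ⟨b, fun n hn => by omega⟩
  refine ⟨a, haA, ?_, ?_⟩
  · exact (haw.comp h2n).congr fun n => hw2 n
  · exact (haw.comp h2n1).congr fun n => hw2' n
end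

section
/- Let (X,ρ) be a metric space, A, B ⊆ X, C a set, P ⊆ A × B × C², and (T_A, T_B, H_A, H_B, f_A, f_B) ∈ CEF_C^P(A,B). Let (x₀, y₀, u₀, v₀) ∈ P, with {x_n}, {u_n} the iterated sequences of (T_A, H_A) starting from (x₀, u₀) and {y_n}, {v_n} the iterated sequences of (T_B, H_B) starting from (y₀, v₀). Then {x_n} and {y_n} are bounded, sup_n f_A(u_n) < ∞, and sup_n f_B(v_n) < ∞. -/
open Filter

lemma rec_bound (lam K : ℝ) (h0 : 0 ≤ lam) (h1 : lam < 1) (a : ℕ → ℝ)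
    (hrec : ∀ n, a (n + 1) ≤ lam * a n + K) :
    ∀ n, a n ≤ max (a 0) (K / (1 - lam)) := by
  intro n
  induction n with
  | zero => exact le_max_left _ _
  | succ n ih =>
    have hpos : 0 < 1 - lam := by linarith
    have hK : K / (1 - lam) ≤ max (a 0) (K / (1 - lam)) := le_max_right _ _
    have hK' : K ≤ (1 - lam) * max (a 0) (K / (1 - lam)) := by
      rw [mul_comm]
      exact (div_le_iff₀ hpos).mp hK
    have := hrec n
    nlinarith [mul_le_mul_of_nonneg_left ih h0]

theorem stmt_8 {X C : Type*} [MetricSpace X] [Nonempty C] (A B : Set X)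
    (P : Set (X × X × C × C)) (TA TB : X → C → X) (HA HB : X → C → C) (fA fB : C → ℝ)
    (hP : ∀ q ∈ P, q.1 ∈ A ∧ q.2.1 ∈ B)
    (hTA : ∀ x ∈ A, ∀ c, TA x c ∈ A) (hTB : ∀ y ∈ B, ∀ c, TB y c ∈ B)
    (hCEF : CEF A B P TA TB HA HB fA fB)
    (x₀ y₀ : X) (u₀ v₀ : C) (hq : (x₀, y₀, u₀, v₀) ∈ P)
    (x : ℕ → X) (u : ℕ → C) (y : ℕ → X) (v : ℕ → C)
    (hxu : ∀ n, (x n, u n) = iterSeq TA HA (x₀, u₀) n)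
    (hyv : ∀ n, (y n, v n) = iterSeq TB HB (y₀, v₀) n) :
    Bornology.IsBounded (Set.range x) ∧ Bornology.IsBounded (Set.range y) ∧
      BddAbove (Set.range fun n => fA (u n)) ∧ BddAbove (Set.range fun n => fB (v n)) := by
  obtain ⟨hC1, hbA, hbB, lam, hl0, hl1, hC3⟩ := hCEF
  set iA := ⨅ c, fA c with hiA
  set iB := ⨅ c, fB c with hiB
  have hiAle : ∀ c, iA ≤ fA c := fun c => ciInf_le hbA c
  have hiBle : ∀ c, iB ≤ fB c := fun c => ciInf_le hbB c
  set S := setDist A B + iA + iB with hS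
  have hmem : ∀ n m, (x n, y m, u n, v m) ∈ P := by
    intro n m
    have h := hC1 (x₀, y₀, u₀, v₀) hq n m
    simpa [← hxu n, ← hyv m] using h
  have hxs : ∀ n, x (n + 1) = TA (x n) (u n) ∧ u (n + 1) = HA (x n) (u n) := by
    intro n
    have h1 := hxu (n + 1)
    rw [iterSeq, ← hxu n] at h1
    exact ⟨congrArg Prod.fst h1, congrArg Prod.snd h1⟩
  have hys : ∀ n, y (n + 1) = TB (y n) (v n) ∧ v (n + 1) = HB (y n) (v n) := by
    intro n
    have h1 := hyv (n + 1)
    rw [iterSeq, ← hyv n] at h1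
    exact ⟨congrArg Prod.fst h1, congrArg Prod.snd h1⟩
  have hstep : ∀ n m, dist (x (n + 1)) (y (m + 1)) + fA (u (n + 1)) + fB (v (m + 1)) ≤
      lam * (dist (x n) (y m) + fA (u n) + fB (v m)) + (1 - lam) * S := by
    intro n m
    have h := hC3 (x n, y m, u n, v m) (hmem n m)
    rw [(hxs n).1, (hxs n).2, (hys m).1, (hys m).2]
    exact h
  -- first recursion: a n = g(1, n)
  set c1 := dist (x 0) (x 1) + fA (u 0) - fA (u 1) with hc1
  set a : ℕ → ℝ := fun n => dist (x 1) (y n) + fA (u 1) + fB (v n) with ha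
  have hga : ∀ n, dist (x 0) (y n) + fA (u 0) + fB (v n) ≤ a n + c1 := by
    intro n
    have := dist_triangle (x 0) (x 1) (y n)
    simp only [ha, hc1]
    linarith
  have harec : ∀ n, a (n + 1) ≤ lam * a n + (lam * c1 + (1 - lam) * S) := by
    intro n
    have h := hstep 0 n
    have h2 := mul_le_mul_of_nonneg_left (hga n) hl0
    simp only [ha]
    calc dist (x 1) (y (n + 1)) + fA (u 1) + fB (v (n + 1))
        ≤ lam * (dist (x 0) (y n) + fA (u 0) + fB (v n)) + (1 - lam) * S := h
      _ ≤ lam * (a n + c1) + (1 - lam) * S := by linarith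
      _ = lam * a n + (lam * c1 + (1 - lam) * S) := by ring
  set Ma := max (a 0) ((lam * c1 + (1 - lam) * S) / (1 - lam)) with hMa
  have haB : ∀ n, a n ≤ Ma := rec_bound lam _ hl0 hl1 a harec
  have hg0 : ∀ n, dist (x 0) (y n) + fA (u 0) + fB (v n) ≤ Ma + c1 := fun n =>
    le_trans (hga n) (by linarith [haB n])
  have hdy : ∀ n, dist (x 0) (y n) ≤ Ma + c1 - iA - iB := by
    intro n
    have := hg0 n; have := hiAle (u 0); have := hiBle (v n); linarith
  have hfB : ∀ n, fB (v n) ≤ Ma + c1 - iA := by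
    intro n
    have := hg0 n; have := hiAle (u 0); have := dist_nonneg (x := x 0) (y := y n)
    linarith
  -- second recursion: b n = g(n, 1)
  set c2 := dist (y 0) (y 1) + fB (v 0) - fB (v 1) with hc2
  set b : ℕ → ℝ := fun n => dist (x n) (y 1) + fA (u n) + fB (v 1) with hb
  have hgb : ∀ n, dist (x n) (y 0) + fA (u n) + fB (v 0) ≤ b n + c2 := by
    intro n
    have h1 := dist_triangle (x n) (y 1) (y 0)
    have h2 : dist (y 1) (y 0) = dist (y 0) (y 1) := dist_comm _ _
    simp only [hb, hc2]
    linarith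
  have hbrec : ∀ n, b (n + 1) ≤ lam * b n + (lam * c2 + (1 - lam) * S) := by
    intro n
    have h := hstep n 0
    have h2 := mul_le_mul_of_nonneg_left (hgb n) hl0
    simp only [hb]
    calc dist (x (n + 1)) (y 1) + fA (u (n + 1)) + fB (v 1)
        ≤ lam * (dist (x n) (y 0) + fA (u n) + fB (v 0)) + (1 - lam) * S := h
      _ ≤ lam * (b n + c2) + (1 - lam) * S := by linarith
      _ = lam * b n + (lam * c2 + (1 - lam) * S) := by ring
  set Mb := max (b 0) ((lam * c2 + (1 - lam) * S) / (1 - lam)) with hMb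
  have hbB' : ∀ n, b n ≤ Mb := rec_bound lam _ hl0 hl1 b hbrec
  have hg0' : ∀ n, dist (x n) (y 0) + fA (u n) + fB (v 0) ≤ Mb + c2 := fun n =>
    le_trans (hgb n) (by linarith [hbB' n])
  have hdx : ∀ n, dist (x n) (y 0) ≤ Mb + c2 - iA - iB := by
    intro n
    have := hg0' n; have := hiAle (u n); have := hiBle (v 0); linarith
  have hfA : ∀ n, fA (u n) ≤ Mb + c2 - iB := by
    intro n
    have := hg0' n; have := hiBle (v 0); have := dist_nonneg (x := x n) (y := y 0)
    linarith
  refine ⟨?_, ?_, ?_, ?_⟩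
  · refine (Metric.isBounded_closedBall (x := y 0) (r := Mb + c2 - iA - iB)).subset ?_
    rintro _ ⟨n, rfl⟩
    exact Metric.mem_closedBall.2 (hdx n)
  · refine (Metric.isBounded_closedBall (x := x 0) (r := Ma + c1 - iA - iB)).subset ?_
    rintro _ ⟨n, rfl⟩
    exact Metric.mem_closedBall.2 (by rw [dist_comm]; exact hdy n)
  · exact ⟨Mb + c2 - iB, by rintro _ ⟨n, rfl⟩; exact hfA n⟩
  · exact ⟨Ma + c1 - iA, by rintro _ ⟨n, rfl⟩; exact hfB n⟩
end

section
/- Let (X,ρ) be a metric space, A, B ⊆ X, C a set, P ⊆ A × B × C², (A,B) ∈ CD_X^P(f_A,f_B), and (T_A, T_B, H_A, H_B, f_A, f_B) ∈ CEF_C^P(A,B). Let (x₀, y₀, u₀, v₀) ∈ P with {x_n}, {u_n} the iterated sequences of (T_A, H_A) from (x₀, u₀) and {y_n}, {v_n} the iterated sequences of (T_B, H_B) from (y₀, v₀). Then {x_n} converges to some α ∈ A, lim_{k→∞} sup_{n≥k,m≥k} ρ(x_n, y_m) = lim_n ρ(x_n, y_n) = lim_n ρ(α, y_n) = dist(A,B),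 lim_n f_A(u_n) = inf_C f_A, and lim_n f_B(v_n) = inf_C f_B. -/
open Filter

lemma aux_seq_bound (lam Cm : ℝ) (h0 : 0 ≤ lam) (h1 : lam < 1) (a : ℕ → ℝ)
    (hstep : ∀ d, a (d + 1) ≤ lam * a d + Cm) :
    ∀ d, a d ≤ max (a 0) (Cm / (1 - lam)) := by
  intro d
  induction d with
  | zero => exact le_max_left _ _
  | succ d ih =>
    have h1' : 0 < 1 - lam := by linarith
    have hC : Cm ≤ (1 - lam) * max (a 0) (Cm / (1 - lam)) := by
      have h2 : Cm / (1 - lam) ≤ max (a 0) (Cm / (1 - lam)) := le_max_right _ _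
      have h3 : Cm = (1 - lam) * (Cm / (1 - lam)) := by field_simp
      nlinarith
    have h4 := hstep d
    nlinarith [mul_le_mul_of_nonneg_left ih h0]

theorem stmt_9 {X C : Type*} [MetricSpace X] [Nonempty C] (A B : Set X)
    (P : Set (X × X × C × C)) (TA TB : X → C → X) (HA HB : X → C → C) (fA fB : C → ℝ)
    (hP : ∀ q ∈ P, q.1 ∈ A ∧ q.2.1 ∈ B)
    (hTA : ∀ x ∈ A, ∀ c, TA x c ∈ A) (hTB : ∀ y ∈ B, ∀ c, TB y c ∈ B)
    (hCD : CDP A B P fA fB)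
    (hCEF : CEF A B P TA TB HA HB fA fB)
    (x₀ y₀ : X) (u₀ v₀ : C) (hq : (x₀, y₀, u₀, v₀) ∈ P)
    (x : ℕ → X) (u : ℕ → C) (y : ℕ → X) (v : ℕ → C)
    (hxu : ∀ n, (x n, u n) = iterSeq TA HA (x₀, u₀) n)
    (hyv : ∀ n, (y n, v n) = iterSeq TB HB (y₀, v₀) n) :
    ∃ α ∈ A, Tendsto x atTop (nhds α) ∧
      Tendsto (supDist x y) atTop (nhds (setDist A B)) ∧
      Tendsto (fun n => dist (x n) (y n)) atTop (nhds (setDist A B)) ∧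
      Tendsto (fun n => dist α (y n)) atTop (nhds (setDist A B)) ∧
      Tendsto (fun n => fA (u n)) atTop (nhds (⨅ c, fA c)) ∧
      Tendsto (fun n => fB (v n)) atTop (nhds (⨅ c, fB c)) := by

  obtain ⟨hInv, hbA, hbB, lam, hlam0, hlam1, hcontr⟩ := hCEF
  set dAB := setDist A B with hdAB
  set iA := ⨅ c, fA c with hiA
  set iB := ⨅ c, fB c with hiB
  set S := dAB + iA + iB with hS
  -- recurrence for x, u
  have hx0 : x 0 = x₀ ∧ u 0 = u₀ := by
    simpa [iterSeq, Prod.ext_iff] using hxu 0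
  have hy0 : y 0 = y₀ ∧ v 0 = v₀ := by
    simpa [iterSeq, Prod.ext_iff] using hyv 0
  have hxstep : ∀ n, x (n + 1) = TA (x n) (u n) ∧ u (n + 1) = HA (x n) (u n) := by
    intro n
    have h1 := hxu (n + 1)
    rw [show iterSeq TA HA (x₀, u₀) (n+1) =
      (TA (iterSeq TA HA (x₀, u₀) n).1 (iterSeq TA HA (x₀, u₀) n).2,
       HA (iterSeq TA HA (x₀, u₀) n).1 (iterSeq TA HA (x₀, u₀) n).2) from rfl,
      ← hxu n] at h1
    exact ⟨congrArg Prod.fst h1, congrArg Prod.snd h1⟩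
  have hystep : ∀ n, y (n + 1) = TB (y n) (v n) ∧ v (n + 1) = HB (y n) (v n) := by
    intro n
    have h1 := hyv (n + 1)
    rw [show iterSeq TB HB (y₀, v₀) (n+1) =
      (TB (iterSeq TB HB (y₀, v₀) n).1 (iterSeq TB HB (y₀, v₀) n).2,
       HB (iterSeq TB HB (y₀, v₀) n).1 (iterSeq TB HB (y₀, v₀) n).2) from rfl,
      ← hyv n] at h1
    exact ⟨congrArg Prod.fst h1, congrArg Prod.snd h1⟩
  -- memberships
  have hxA : ∀ n, x n ∈ A := by
    intro n
    induction n with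
    | zero => rw [hx0.1]; exact (hP _ hq).1
    | succ n ih => rw [(hxstep n).1]; exact hTA _ ih _
  have hyB : ∀ n, y n ∈ B := by
    intro n
    induction n with
    | zero => rw [hy0.1]; exact (hP _ hq).2
    | succ n ih => rw [(hystep n).1]; exact hTB _ ih _
  -- P-membership of all quadruples
  have hPnm : ∀ n m, (x n, y m, u n, v m) ∈ P := by
    intro n m
    have h := hInv (x₀, y₀, u₀, v₀) hq n m
    simpa [← hxu n, ← hyv m] using h
  -- the function φ
  set φ : ℕ → ℕ → ℝ := fun n m => dist (x n) (y m) + fA (u n) + fB (v m) with hφ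
  -- lower bounds
  have hiAle : ∀ c, iA ≤ fA c := fun c => ciInf_le hbA c
  have hiBle : ∀ c, iB ≤ fB c := fun c => ciInf_le hbB c
  have hdist_bddBelow : BddBelow (Set.image2 dist A B) := by
    refine ⟨0, ?_⟩
    rintro d ⟨a, _, b, _, rfl⟩
    exact dist_nonneg
  have hdle : ∀ n m, dAB ≤ dist (x n) (y m) := by
    intro n m
    exact csInf_le hdist_bddBelow ⟨x n, hxA n, y m, hyB m, rfl⟩
  have hφS : ∀ n m, S ≤ φ n m := by
    intro n m
    have := hdle n m; have := hiAle (u n); have := hiBle (v m)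
    simp only [hφ, hS]; linarith
  -- key contraction step
  have hkey : ∀ n m, φ (n + 1) (m + 1) ≤ lam * φ n m + (1 - lam) * S := by
    intro n m
    have h := hcontr (x n, y m, u n, v m) (hPnm n m)
    simp only [hφ, hS, hdAB, hiA, hiB]
    rw [(hxstep n).1, (hxstep n).2, (hystep m).1, (hystep m).2]
    simpa using h
  -- iterated contraction
  have hiter : ∀ k n m, φ (n + k) (m + k) - S ≤ lam ^ k * (φ n m - S) := by
    intro k
    induction k with
    | zero => intro n m; simp
    | succ k ih =>
      intro n m
      have h1 := hkey (n + k) (m + k)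
      have h2 := ih n m
      have h3 : φ (n + k) (m + k) - S ≤ lam ^ k * (φ n m - S) := h2
      calc φ (n + (k + 1)) (m + (k + 1)) - S
          = φ ((n + k) + 1) ((m + k) + 1) - S := rfl
        _ ≤ lam * (φ (n + k) (m + k) - S) := by linarith
        _ ≤ lam * (lam ^ k * (φ n m - S)) := by nlinarith
        _ = lam ^ (k + 1) * (φ n m - S) := by ring
  -- boundedness of φ d 0
  have hone : 0 < 1 - lam := by linarith
  have hg : ∃ Mg : ℝ, ∀ d, φ d 0 ≤ Mg := by
    have hstep : ∀ d, φ (d + 1) 0 ≤ lam * φ d 0 +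
        ((1 - lam) * S - fB (v 1) + dist (x 0) (y 1) + dist (x 0) (y 0) + fB (v 0)) := by
      intro d
      have h1 := hkey d 0
      have htri : dist (x (d + 1)) (y 0) ≤
          dist (x (d + 1)) (y 1) + dist (x 0) (y 1) + dist (x 0) (y 0) := by
        calc dist (x (d + 1)) (y 0) ≤ dist (x (d + 1)) (y 1) + dist (y 1) (y 0) :=
              dist_triangle _ _ _
          _ ≤ dist (x (d + 1)) (y 1) + (dist (y 1) (x 0) + dist (x 0) (y 0)) := by
              linarith [dist_triangle (y 1) (x 0) (y 0)]
          _ = dist (x (d + 1)) (y 1) + dist (x 0) (y 1) + dist (x 0) (y 0) := by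
              rw [dist_comm (y 1) (x 0)]; ring
      have hexp : dist (x (d + 1)) (y 1) = φ (d + 1) 1 - fA (u (d + 1)) - fB (v 1) := by
        simp only [hφ]; ring
      simp only [hφ] at h1 htri ⊢
      nlinarith
    obtain ⟨Mg, hMg⟩ : ∃ Mg, ∀ d, φ d 0 ≤ Mg :=
      ⟨_, aux_seq_bound lam _ hlam0 hlam1 (fun d => φ d 0) hstep⟩
    exact ⟨Mg, hMg⟩
  have hh : ∃ Mh : ℝ, ∀ d, φ 0 d ≤ Mh := by
    have hstep : ∀ d, φ 0 (d + 1) ≤ lam * φ 0 d +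
        ((1 - lam) * S - fA (u 1) + dist (x 1) (y 0) + dist (x 0) (y 0) + fA (u 0)) := by
      intro d
      have h1 := hkey 0 d
      have htri : dist (x 0) (y (d + 1)) ≤
          dist (x 1) (y (d + 1)) + dist (x 1) (y 0) + dist (x 0) (y 0) := by
        calc dist (x 0) (y (d + 1)) ≤ dist (x 0) (x 1) + dist (x 1) (y (d + 1)) :=
              dist_triangle _ _ _
          _ ≤ (dist (x 0) (y 0) + dist (y 0) (x 1)) + dist (x 1) (y (d + 1)) := by
              linarith [dist_triangle (x 0) (y 0) (x 1)]
          _ = dist (x 1) (y (d + 1)) + dist (x 1) (y 0) + dist (x 0) (y 0) := by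
              rw [dist_comm (y 0) (x 1)]; ring
      have hexp : dist (x 1) (y (d + 1)) = φ 1 (d + 1) - fA (u 1) - fB (v (d + 1)) := by
        simp only [hφ]; ring
      simp only [hφ] at h1 htri ⊢
      nlinarith
    exact ⟨_, aux_seq_bound lam _ hlam0 hlam1 (fun d => φ 0 d) hstep⟩
  obtain ⟨Mg, hMg⟩ := hg
  obtain ⟨Mh, hMh⟩ := hh
  set M : ℝ := max (max Mg Mh) S with hM
  have hMS : S ≤ M := le_max_right _ _
  -- uniform bound: for n, m ≥ k, φ n m ≤ S + lam^k * (M - S)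
  have hunif : ∀ k n m, k ≤ n → k ≤ m → φ n m - S ≤ lam ^ k * (M - S) := by
    intro k n m hkn hkm
    rcases le_total n m with hnm | hmn
    · have hn : n = 0 + n := by omega
      have hm : m = (m - n) + n := by omega
      have h1 : φ n m - S ≤ lam ^ n * (φ 0 (m - n) - S) := by
        have := hiter n 0 (m - n)
        rw [← hn, ← hm] at this
        exact this
      have h2 : φ 0 (m - n) - S ≤ M - S := by
        have := hMh (m - n)
        have : φ 0 (m - n) ≤ M := le_trans this (le_trans (le_max_right Mg Mh) (le_max_left _ _))
        linarith
      have h3 : lam ^ n ≤ lam ^ k := pow_le_pow_of_le_one hlam0 hlam1.le hkn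
      have h4 : 0 ≤ φ 0 (m - n) - S := by linarith [hφS 0 (m - n)]
      calc φ n m - S ≤ lam ^ n * (φ 0 (m - n) - S) := h1
        _ ≤ lam ^ k * (φ 0 (m - n) - S) := mul_le_mul_of_nonneg_right h3 h4
        _ ≤ lam ^ k * (M - S) := mul_le_mul_of_nonneg_left h2 (pow_nonneg hlam0 k)
    · have hn : n = (n - m) + m := by omega
      have hm : m = 0 + m := by omega
      have h1 : φ n m - S ≤ lam ^ m * (φ (n - m) 0 - S) := by
        have := hiter m (n - m) 0
        rw [← hn, ← hm] at this
        exact this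
      have h2 : φ (n - m) 0 - S ≤ M - S := by
        have := hMg (n - m)
        have : φ (n - m) 0 ≤ M := le_trans this (le_trans (le_max_left Mg Mh) (le_max_left _ _))
        linarith
      have h3 : lam ^ m ≤ lam ^ k := pow_le_pow_of_le_one hlam0 hlam1.le hkm
      have h4 : 0 ≤ φ (n - m) 0 - S := by linarith [hφS (n - m) 0]
      calc φ n m - S ≤ lam ^ m * (φ (n - m) 0 - S) := h1
        _ ≤ lam ^ k * (φ (n - m) 0 - S) := mul_le_mul_of_nonneg_right h3 h4
        _ ≤ lam ^ k * (M - S) := mul_le_mul_of_nonneg_left h2 (pow_nonneg hlam0 k)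
  -- consequences along the diagonal
  have hdiag : ∀ n, φ n n - S ≤ lam ^ n * (M - S) := fun n => hunif n n n le_rfl le_rfl
  have hpow0 : Tendsto (fun k : ℕ => lam ^ k) atTop (nhds 0) :=
    tendsto_pow_atTop_nhds_zero_of_lt_one hlam0 hlam1
  have hup : Tendsto (fun k : ℕ => dAB + lam ^ k * (M - S)) atTop (nhds dAB) := by
    have := (hpow0.mul_const (M - S)).const_add dAB
    simpa using this
  have hupA : Tendsto (fun k : ℕ => iA + lam ^ k * (M - S)) atTop (nhds iA) := by
    have := (hpow0.mul_const (M - S)).const_add iA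
    simpa using this
  have hupB : Tendsto (fun k : ℕ => iB + lam ^ k * (M - S)) atTop (nhds iB) := by
    have := (hpow0.mul_const (M - S)).const_add iB
    simpa using this
  -- f_A(u n) → iA, f_B(v n) → iB, dist(x n, y n) → dAB
  have htendA : Tendsto (fun n => fA (u n)) atTop (nhds iA) := by
    refine tendsto_of_tendsto_of_tendsto_of_le_of_le tendsto_const_nhds hupA
      (fun n => hiAle (u n)) (fun n => ?_)
    have h1 := hdiag n
    have h2 := hdle n n
    have h3 := hiBle (v n)
    simp only [hφ] at h1
    linarith [hS]
  have htendB : Tendsto (fun n => fB (v n)) atTop (nhds iB) := by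
    refine tendsto_of_tendsto_of_tendsto_of_le_of_le tendsto_const_nhds hupB
      (fun n => hiBle (v n)) (fun n => ?_)
    have h1 := hdiag n
    have h2 := hdle n n
    have h3 := hiAle (u n)
    simp only [hφ] at h1
    linarith [hS]
  have htendD : Tendsto (fun n => dist (x n) (y n)) atTop (nhds dAB) := by
    refine tendsto_of_tendsto_of_tendsto_of_le_of_le tendsto_const_nhds hup
      (fun n => hdle n n) (fun n => ?_)
    have h1 := hdiag n
    have h2 := hiAle (u n)
    have h3 := hiBle (v n)
    simp only [hφ] at h1
    linarith [hS]
  -- supDist → dAB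
  have hsupTend : Tendsto (supDist x y) atTop (nhds dAB) := by
    have hub : ∀ k, supDist x y k ≤ dAB + lam ^ k * (M - S) := by
      intro k
      apply Real.sSup_le
      · rintro d ⟨n, m, hkn, hkm, rfl⟩
        have h1 := hunif k n m hkn hkm
        have h2 := hiAle (u n)
        have h3 := hiBle (v m)
        simp only [hφ] at h1
        linarith [hS]
      · have hd0 : 0 ≤ dAB := by
          rw [hdAB, setDist]
          exact Real.sInf_nonneg (by rintro d ⟨a, _, b, _, rfl⟩; exact dist_nonneg)
        have h0 : 0 ≤ lam ^ k * (M - S) := mul_nonneg (pow_nonneg hlam0 k) (by linarith)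
        linarith
    have hlb : ∀ k, dAB ≤ supDist x y k := by
      intro k
      have hmem : dist (x k) (y k) ∈
          {d : ℝ | ∃ n m, k ≤ n ∧ k ≤ m ∧ d = dist (x n) (y m)} :=
        ⟨k, k, le_rfl, le_rfl, rfl⟩
      have hbdd : BddAbove {d : ℝ | ∃ n m, k ≤ n ∧ k ≤ m ∧ d = dist (x n) (y m)} := by
        refine ⟨dAB + lam ^ k * (M - S), ?_⟩
        rintro d ⟨n, m, hkn, hkm, rfl⟩
        have h1 := hunif k n m hkn hkm
        have h2 := hiAle (u n)
        have h3 := hiBle (v m)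
        simp only [hφ] at h1
        linarith [hS]
      exact le_trans (hdle k k) (le_csSup hbdd hmem)
    exact tendsto_of_tendsto_of_tendsto_of_le_of_le tendsto_const_nhds hup hlb hub
  -- apply CD to obtain the limit α
  obtain ⟨α, hαA, hxα⟩ := hCD x y u v hxA hyB hsupTend hPnm htendA htendB
  refine ⟨α, hαA, hxα, hsupTend, htendD, ?_, htendA, htendB⟩
  -- dist α (y n) → dAB
  have hd0 : Tendsto (fun n => dist α (x n)) atTop (nhds 0) := by
    have := Tendsto.dist (tendsto_const_nhds : Tendsto (fun _ : ℕ => α) atTop (nhds α)) hxα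
    simpa using this
  have hlow : Tendsto (fun n => dist (x n) (y n) - dist α (x n)) atTop (nhds dAB) := by
    have := htendD.sub hd0
    simpa using this
  have hhigh : Tendsto (fun n => dist (x n) (y n) + dist α (x n)) atTop (nhds dAB) := by
    have := htendD.add hd0
    simpa using this
  refine tendsto_of_tendsto_of_tendsto_of_le_of_le hlow hhigh (fun n => ?_) (fun n => ?_)
  · have := dist_triangle (x n) α (y n)
    rw [dist_comm (x n) α] at this
    linarith
  · have := dist_triangle α (x n) (y n)
    linarith
end

section
/- Let (X,ρ), A, B, C, P, f_A, f_B be as in the CEF/CD setting with (A,B) ∈ CD_X^P(f_A,f_B) and (T_A,T_B,H_A,H_B,f_A,f_B) ∈ CEF_C^P(A,B). If (x₀,y₀,u₀,v₀) ∈ P and (z₀,y₀,t₀,v₀) ∈ P, and {x_n},{u_n} are the iterated sequences of (T_A,H_A) from (x₀,u₀) while {z_n},{t_n} are the iterated sequences of (T_A,H_A) from (z₀,t₀), then lim x_n = lim z_n ∈ A (both limits exist and are equal). -/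
open Filter

lemma setDist_le' {X : Type*} [MetricSpace X] {A B : Set X} {a b : X}
    (ha : a ∈ A) (hb : b ∈ B) : setDist A B ≤ dist a b :=
  csInf_le ⟨0, by rintro d ⟨a', _, b', _, rfl⟩; exact dist_nonneg⟩
    (Set.mem_image2_of_mem ha hb)

lemma key' {X C : Type*} [MetricSpace X] [Nonempty C]
    (A B : Set X) (P : Set (X × X × C × C)) (TA TB : X → C → X)
    (HA HB : X → C → C) (fA fB : C → ℝ)
    (hP : ∀ q ∈ P, q.1 ∈ A ∧ q.2.1 ∈ B)
    (hTA : ∀ x ∈ A, ∀ c, TA x c ∈ A) (hTB : ∀ y ∈ B, ∀ c, TB y c ∈ B)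
    (hInv : ∀ q ∈ P, ∀ n m : ℕ, ((iterSeq TA HA (q.1, q.2.2.1) n).1,
       (iterSeq TB HB (q.2.1, q.2.2.2) m).1,
       (iterSeq TA HA (q.1, q.2.2.1) n).2,
       (iterSeq TB HB (q.2.1, q.2.2.2) m).2) ∈ P)
    (hbA : BddBelow (Set.range fA)) (hbB : BddBelow (Set.range fB))
    {lam : ℝ} (hlam0 : 0 ≤ lam) (hlam1 : lam < 1)
    (hcontr : ∀ q ∈ P, dist (TA q.1 q.2.2.1) (TB q.2.1 q.2.2.2)
        + fA (HA q.1 q.2.2.1) + fB (HB q.2.1 q.2.2.2) ≤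
      lam * (dist q.1 q.2.1 + fA q.2.2.1 + fB q.2.2.2)
        + (1 - lam) * (setDist A B + (⨅ c, fA c) + (⨅ c, fB c)))
    {a₀ b₀ : X} {c₀ d₀ : C} (hq : (a₀, b₀, c₀, d₀) ∈ P) :
    ∃ Q : ℝ, 0 ≤ Q ∧
      (∀ n, (iterSeq TA HA (a₀, c₀) n).1 ∈ A) ∧
      (∀ m, (iterSeq TB HB (b₀, d₀) m).1 ∈ B) ∧
      (∀ n m, ((iterSeq TA HA (a₀, c₀) n).1, (iterSeq TB HB (b₀, d₀) m).1,
        (iterSeq TA HA (a₀, c₀) n).2, (iterSeq TB HB (b₀, d₀) m).2) ∈ P) ∧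
      (∀ n m, dist (iterSeq TA HA (a₀, c₀) n).1 (iterSeq TB HB (b₀, d₀) m).1
        ≤ setDist A B + lam ^ (min n m) * Q) ∧
      (∀ n, fA (iterSeq TA HA (a₀, c₀) n).2 ≤ (⨅ c, fA c) + lam ^ n * Q) ∧
      (∀ m, fB (iterSeq TB HB (b₀, d₀) m).2 ≤ (⨅ c, fB c) + lam ^ m * Q) := by
  set xs : ℕ → X × C := iterSeq TA HA (a₀, c₀) with hxs
  set ys : ℕ → X × C := iterSeq TB HB (b₀, d₀) with hys
  set iA := ⨅ c, fA c with hiA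
  set iB := ⨅ c, fB c with hiB
  set dAB := setDist A B with hdAB
  set S := dAB + iA + iB with hS
  set g : ℕ → ℕ → ℝ := fun n m => dist (xs n).1 (ys m).1 + fA (xs n).2 + fB (ys m).2
    with hg
  have memP : ∀ n m, ((xs n).1, (ys m).1, (xs n).2, (ys m).2) ∈ P := fun n m =>
    hInv (a₀, b₀, c₀, d₀) hq n m
  have xsA : ∀ n, (xs n).1 ∈ A := by
    intro n; induction n with
    | zero => exact (hP _ hq).1
    | succ n ih => exact hTA _ ih _
  have ysB : ∀ m, (ys m).1 ∈ B := by
    intro m; induction m with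
    | zero => exact (hP _ hq).2
    | succ m ih => exact hTB _ ih _
  have step : ∀ n m, g (n + 1) (m + 1) ≤ lam * g n m + (1 - lam) * S := by
    intro n m
    exact hcontr ((xs n).1, (ys m).1, (xs n).2, (ys m).2) (memP n m)
  have hfAlb : ∀ n, iA ≤ fA (xs n).2 := fun n => ciInf_le hbA _
  have hfBlb : ∀ m, iB ≤ fB (ys m).2 := fun m => ciInf_le hbB _
  have glb : ∀ n m, S ≤ g n m := by
    intro n m
    have h1 : dAB ≤ dist (xs n).1 (ys m).1 := setDist_le' (xsA n) (ysB m)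
    have h2 := hfAlb n
    have h3 := hfBlb m
    simp only [g, S]; linarith
  have diag : ∀ k n m, g (n + k) (m + k) ≤ lam ^ k * g n m + (1 - lam ^ k) * S := by
    intro k
    induction k with
    | zero => intro n m; simp
    | succ k ih =>
      intro n m
      have h1 := step (n + k) (m + k)
      have h2 := mul_le_mul_of_nonneg_left (ih n m) hlam0
      have hgoal : g (n + (k + 1)) (m + (k + 1)) = g ((n + k) + 1) ((m + k) + 1) := rfl
      rw [hgoal, pow_succ]
      nlinarith
  have recB : ∀ j, g 0 (j + 1) ≤ lam * g 0 j + (1 - lam) * S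
      + (dist (xs 0).1 (xs 1).1 + fA (xs 0).2 - iA) := by
    intro j
    have h1 := step 0 j
    have htri : dist (xs 0).1 (ys (j + 1)).1 ≤
        dist (xs 0).1 (xs 1).1 + dist (xs 1).1 (ys (j + 1)).1 := dist_triangle _ _ _
    have h2 := hfAlb 1
    simp only [g] at h1 ⊢
    linarith
  have recA : ∀ j, g (j + 1) 0 ≤ lam * g j 0 + (1 - lam) * S
      + (dist (ys 0).1 (ys 1).1 + fB (ys 0).2 - iB) := by
    intro j
    have h1 := step j 0
    have htri : dist (xs (j + 1)).1 (ys 0).1 ≤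
        dist (xs (j + 1)).1 (ys 1).1 + dist (ys 1).1 (ys 0).1 := dist_triangle _ _ _
    have h2 := hfBlb 1
    have hc : dist (ys 1).1 (ys 0).1 = dist (ys 0).1 (ys 1).1 := dist_comm _ _
    simp only [g] at h1 ⊢
    linarith
  set K0 := dist (xs 0).1 (xs 1).1 + fA (xs 0).2 - iA with hK0
  set K1 := dist (ys 0).1 (ys 1).1 + fB (ys 0).2 - iB with hK1
  have hl1 : (0:ℝ) < 1 - lam := by linarith
  set B0 := max (g 0 0) (S + K0 / (1 - lam)) with hB0
  set B1 := max (g 0 0) (S + K1 / (1 - lam)) with hB1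
  have bnd0 : ∀ j, g 0 j ≤ B0 := by
    intro j; induction j with
    | zero => exact le_max_left _ _
    | succ j ih =>
      have h1 := recB j
      have h2 := mul_le_mul_of_nonneg_left ih hlam0
      have h3 : S + K0 / (1 - lam) ≤ B0 := le_max_right _ _
      have h5 := mul_le_mul_of_nonneg_left h3 hl1.le
      have h4 : (1 - lam) * (S + K0 / (1 - lam)) = (1 - lam) * S + K0 := by
        field_simp
      rw [h4] at h5
      linarith
  have bnd1 : ∀ j, g j 0 ≤ B1 := by
    intro j; induction j with
    | zero => exact le_max_left _ _
    | succ j ih =>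
      have h1 := recA j
      have h2 := mul_le_mul_of_nonneg_left ih hlam0
      have h3 : S + K1 / (1 - lam) ≤ B1 := le_max_right _ _
      have h5 := mul_le_mul_of_nonneg_left h3 hl1.le
      have h4 : (1 - lam) * (S + K1 / (1 - lam)) = (1 - lam) * S + K1 := by
        field_simp
      rw [h4] at h5
      linarith
  set Q := max B0 B1 - S with hQ
  have hQ0 : 0 ≤ Q := by
    have := glb 0 0
    have h1 : g 0 0 ≤ B0 := bnd0 0
    have h2 : B0 ≤ max B0 B1 := le_max_left _ _
    simp only [Q]; linarith
  have gbound : ∀ n m, g n m ≤ lam ^ (min n m) * Q + S := by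
    intro n m
    have hBQ0 : B0 ≤ Q + S := by
      have := le_max_left B0 B1; simp only [Q]; linarith
    have hBQ1 : B1 ≤ Q + S := by
      have := le_max_right B0 B1; simp only [Q]; linarith
    rcases le_total n m with h | h
    · have hd := diag n 0 (m - n)
      rw [Nat.zero_add, Nat.sub_add_cancel h] at hd
      have hb := (bnd0 (m - n)).trans hBQ0
      have hp : (0:ℝ) ≤ lam ^ n := pow_nonneg hlam0 n
      have h2 := mul_le_mul_of_nonneg_left hb hp
      rw [min_eq_left h]
      nlinarith
    · have hd := diag m (n - m) 0
      rw [Nat.zero_add, Nat.sub_add_cancel h] at hd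
      have hb := (bnd1 (n - m)).trans hBQ1
      have hp : (0:ℝ) ≤ lam ^ m := pow_nonneg hlam0 m
      have h2 := mul_le_mul_of_nonneg_left hb hp
      rw [min_eq_right h]
      nlinarith
  refine ⟨Q, hQ0, xsA, ysB, memP, ?_, ?_, ?_⟩
  · intro n m
    have h1 := gbound n m
    have h2 := hfAlb n
    have h3 := hfBlb m
    simp only [g] at h1
    linarith
  · intro n
    have h1 := gbound n n
    rw [min_self] at h1
    have h2 : dAB ≤ dist (xs n).1 (ys n).1 := setDist_le' (xsA n) (ysB n)
    have h3 := hfBlb n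
    simp only [g] at h1
    linarith
  · intro m
    have h1 := gbound m m
    rw [min_self] at h1
    have h2 : dAB ≤ dist (xs m).1 (ys m).1 := setDist_le' (xsA m) (ysB m)
    have h3 := hfAlb m
    simp only [g] at h1
    linarith

theorem stmt_10 {X C : Type*} [MetricSpace X] [Nonempty C] (A B : Set X)
    (P : Set (X × X × C × C)) (TA TB : X → C → X) (HA HB : X → C → C) (fA fB : C → ℝ)
    (hP : ∀ q ∈ P, q.1 ∈ A ∧ q.2.1 ∈ B)
    (hTA : ∀ x ∈ A, ∀ c, TA x c ∈ A) (hTB : ∀ y ∈ B, ∀ c, TB y c ∈ B)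
    (hCD : CDP A B P fA fB)
    (hCEF : CEF A B P TA TB HA HB fA fB)
    (x₀ z₀ y₀ : X) (u₀ t₀ v₀ : C)
    (hq1 : (x₀, y₀, u₀, v₀) ∈ P) (hq2 : (z₀, y₀, t₀, v₀) ∈ P)
    (x z : ℕ → X) (u t : ℕ → C)
    (hxu : ∀ n, (x n, u n) = iterSeq TA HA (x₀, u₀) n)
    (hzt : ∀ n, (z n, t n) = iterSeq TA HA (z₀, t₀) n) :
    ∃ α ∈ A, Tendsto x atTop (nhds α) ∧ Tendsto z atTop (nhds α) := by
  obtain ⟨hInv, hbA, hbB, lam, hlam0, hlam1, hcontr⟩ := hCEF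
  obtain ⟨Qx, hQx0, hxA, hyB, hPx, hdx, hfAx, hfBx⟩ :=
    key' A B P TA TB HA HB fA fB hP hTA hTB hInv hbA hbB hlam0 hlam1 hcontr hq1
  obtain ⟨Qz, hQz0, hzA, -, hPz, hdz, hfAz, -⟩ :=
    key' A B P TA TB HA HB fA fB hP hTA hTB hInv hbA hbB hlam0 hlam1 hcontr hq2
  have hx : ∀ n, x n = (iterSeq TA HA (x₀, u₀) n).1 := fun n => congrArg Prod.fst (hxu n)
  have hu : ∀ n, u n = (iterSeq TA HA (x₀, u₀) n).2 := fun n => congrArg Prod.snd (hxu n)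
  have hz : ∀ n, z n = (iterSeq TA HA (z₀, t₀) n).1 := fun n => congrArg Prod.fst (hzt n)
  have ht : ∀ n, t n = (iterSeq TA HA (z₀, t₀) n).2 := fun n => congrArg Prod.snd (hzt n)
  set y : ℕ → X := fun m => (iterSeq TB HB (y₀, v₀) m).1 with hy
  set v : ℕ → C := fun m => (iterSeq TB HB (y₀, v₀) m).2 with hv
  set Q := max Qx Qz with hQ
  have hQ0 : 0 ≤ Q := le_trans hQx0 (le_max_left _ _)
  have hQxQ : ∀ k : ℕ, lam ^ k * Qx ≤ lam ^ k * Q :=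
    fun k => mul_le_mul_of_nonneg_left (le_max_left _ _) (pow_nonneg hlam0 k)
  have hQzQ : ∀ k : ℕ, lam ^ k * Qz ≤ lam ^ k * Q :=
    fun k => mul_le_mul_of_nonneg_left (le_max_right _ _) (pow_nonneg hlam0 k)
  set w : ℕ → X := fun n => if n % 2 = 0 then x (n / 2) else z (n / 2) with hw
  set uw : ℕ → C := fun n => if n % 2 = 0 then u (n / 2) else t (n / 2) with huw
  have hwA : ∀ n, w n ∈ A := by
    intro n
    by_cases h : n % 2 = 0
    · simp only [w, if_pos h]; rw [hx]; exact hxA _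
    · simp only [w, if_neg h]; rw [hz]; exact hzA _
  have hyBm : ∀ m, y m ∈ B := fun m => hyB m
  have hwP : ∀ n m, (w n, y m, uw n, v m) ∈ P := by
    intro n m
    by_cases h : n % 2 = 0
    · simp only [w, uw, if_pos h]; rw [hx, hu]; exact hPx _ m
    · simp only [w, uw, if_neg h]; rw [hz, ht]; exact hPz _ m
  have pow_anti : ∀ k k' : ℕ, k ≤ k' → lam ^ k' ≤ lam ^ k :=
    fun k k' h => pow_le_pow_of_le_one hlam0 hlam1.le h
  have hwd : ∀ k n m, k ≤ n → k ≤ m →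
      dist (w n) (y m) ≤ setDist A B + lam ^ (k / 2) * Q := by
    intro k n m hn hm
    have hmin : k / 2 ≤ min (n / 2) m := by
      refine le_min (Nat.div_le_div_right hn) (le_trans (Nat.div_le_self k 2) hm)
    have hpw : lam ^ (min (n / 2) m) * Q ≤ lam ^ (k / 2) * Q :=
      mul_le_mul_of_nonneg_right (pow_anti _ _ hmin) hQ0
    by_cases h : n % 2 = 0
    · simp only [w, if_pos h]; rw [hx]
      refine le_trans (hdx _ m) ?_
      have := hQxQ (min (n / 2) m); linarith
    · simp only [w, if_neg h]; rw [hz]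
      refine le_trans (hdz _ m) ?_
      have := hQzQ (min (n / 2) m); linarith
  -- supDist convergence
  have hnonempty : ∀ k : ℕ, (∃ d : ℝ, ∃ n m, k ≤ n ∧ k ≤ m ∧ d = dist (w n) (y m)) :=
    fun k => ⟨dist (w k) (y k), k, k, le_refl k, le_refl k, rfl⟩
  have hsup_ub : ∀ k, supDist w y k ≤ setDist A B + lam ^ (k / 2) * Q := by
    intro k
    refine csSup_le (hnonempty k) ?_
    rintro d ⟨n, m, hn, hm, rfl⟩
    exact hwd k n m hn hm
  have hbddAb : ∀ k, BddAbove {d : ℝ | ∃ n m, k ≤ n ∧ k ≤ m ∧ d = dist (w n) (y m)} := by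
    intro k
    exact ⟨setDist A B + lam ^ (k / 2) * Q, by
      rintro d ⟨n, m, hn, hm, rfl⟩; exact hwd k n m hn hm⟩
  have hsup_lb : ∀ k, setDist A B ≤ supDist w y k := fun k =>
    le_trans (setDist_le' (hwA k) (hyBm k))
      (le_csSup (hbddAb k) ⟨k, k, le_refl _, le_refl _, rfl⟩)
  have hdiv2 : Tendsto (fun k : ℕ => k / 2) atTop atTop :=
    tendsto_atTop_atTop.mpr (fun b => ⟨2 * b, fun n hn => by omega⟩)
  have hpow0 : Tendsto (fun k : ℕ => lam ^ (k / 2)) atTop (nhds 0) :=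
    (tendsto_pow_atTop_nhds_zero_of_lt_one hlam0 hlam1).comp hdiv2
  have hub_t : Tendsto (fun k : ℕ => setDist A B + lam ^ (k / 2) * Q) atTop
      (nhds (setDist A B)) := by
    have hcn : Tendsto (fun _ : ℕ => setDist A B) atTop (nhds (setDist A B)) :=
      tendsto_const_nhds
    simpa using hcn.add (hpow0.mul_const Q)
  have hsup : Tendsto (supDist w y) atTop (nhds (setDist A B)) :=
    tendsto_of_tendsto_of_tendsto_of_le_of_le tendsto_const_nhds hub_t hsup_lb hsup_ub
  -- fA along uw
  have hfub : ∀ n, fA (uw n) ≤ (⨅ c, fA c) + lam ^ (n / 2) * Q := by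
    intro n
    by_cases h : n % 2 = 0
    · simp only [uw, if_pos h]; rw [hu]
      refine le_trans (hfAx _) ?_
      have := hQxQ (n / 2); linarith
    · simp only [uw, if_neg h]; rw [ht]
      refine le_trans (hfAz _) ?_
      have := hQzQ (n / 2); linarith
  have hflb : ∀ n, (⨅ c, fA c) ≤ fA (uw n) := fun n => ciInf_le hbA _
  have hfub_t : Tendsto (fun n : ℕ => (⨅ c, fA c) + lam ^ (n / 2) * Q) atTop
      (nhds (⨅ c, fA c)) := by
    have hcn : Tendsto (fun _ : ℕ => (⨅ c, fA c)) atTop (nhds (⨅ c, fA c)) :=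
      tendsto_const_nhds
    simpa using hcn.add (hpow0.mul_const Q)
  have hfA_t : Tendsto (fun n => fA (uw n)) atTop (nhds (⨅ c, fA c)) :=
    tendsto_of_tendsto_of_tendsto_of_le_of_le tendsto_const_nhds hfub_t hflb hfub
  -- fB along v
  have hpow0' : Tendsto (fun m : ℕ => lam ^ m) atTop (nhds 0) :=
    tendsto_pow_atTop_nhds_zero_of_lt_one hlam0 hlam1
  have hgub_t : Tendsto (fun m : ℕ => (⨅ c, fB c) + lam ^ m * Qx) atTop
      (nhds (⨅ c, fB c)) := by
    have hcn : Tendsto (fun _ : ℕ => (⨅ c, fB c)) atTop (nhds (⨅ c, fB c)) :=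
      tendsto_const_nhds
    simpa using hcn.add (hpow0'.mul_const Qx)
  have hfB_t : Tendsto (fun m => fB (v m)) atTop (nhds (⨅ c, fB c)) :=
    tendsto_of_tendsto_of_tendsto_of_le_of_le tendsto_const_nhds hgub_t
      (fun m => ciInf_le hbB _) (fun m => hfBx m)
  obtain ⟨α, hαA, hwt⟩ := hCD w y uw v hwA hyBm hsup hwP hfA_t hfB_t
  refine ⟨α, hαA, ?_, ?_⟩
  · have h2n : Tendsto (fun n : ℕ => 2 * n) atTop atTop :=
      tendsto_atTop_atTop.mpr (fun b => ⟨b, fun n hn => by omega⟩)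
    have hc := hwt.comp h2n
    have hxw : ∀ n, w (2 * n) = x n := by
      intro n
      simp only [w]
      rw [if_pos (by omega)]
      congr 1
      omega
    have : (w ∘ fun n : ℕ => 2 * n) = x := funext fun n => hxw n
    rwa [this] at hc
  · have h2n : Tendsto (fun n : ℕ => 2 * n + 1) atTop atTop :=
      tendsto_atTop_atTop.mpr (fun b => ⟨b, fun n hn => by omega⟩)
    have hc := hwt.comp h2n
    have hzw : ∀ n, w (2 * n + 1) = z n := by
      intro n
      simp only [w]
      rw [if_neg (by omega)]
      congr 1
      omega
    have : (w ∘ fun n : ℕ => 2 * n + 1) = z := funext fun n => hzw n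
    rwa [this] at hc
end

section
/- In the CEF/CD setting with (A,B) ∈ CD_X^P(f_A,f_B) and (T_A,T_B,H_A,H_B,f_A,f_B) ∈ CEF_C^P(A,B): if (x₀,y₀,u₀,v₀) ∈ P, {x_n},{u_n} are the iterated sequences of (T_A,H_A) from (x₀,u₀), α = lim x_n, and {c_n} ∈ IS_{f_A}^P(α, y₀, v₀), then lim_{n→∞} T_A(α, c_n) = α. -/
open Filter

theorem stmt_11 {X C : Type*} [MetricSpace X] [Nonempty C] (A B : Set X)
    (P : Set (X × X × C × C)) (TA TB : X → C → X) (HA HB : X → C → C) (fA fB : C → ℝ)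
    (hP : ∀ q ∈ P, q.1 ∈ A ∧ q.2.1 ∈ B)
    (hTA : ∀ x ∈ A, ∀ c, TA x c ∈ A) (hTB : ∀ y ∈ B, ∀ c, TB y c ∈ B)
    (hCD : CDP A B P fA fB)
    (hCEF : CEF A B P TA TB HA HB fA fB)
    (x₀ y₀ : X) (u₀ v₀ : C) (hq : (x₀, y₀, u₀, v₀) ∈ P)
    (x : ℕ → X) (u : ℕ → C)
    (hxu : ∀ n, (x n, u n) = iterSeq TA HA (x₀, u₀) n)
    (α : X) (hα : Tendsto x atTop (nhds α))
    (c : ℕ → C) (hc : ISseq P fA α y₀ v₀ c) :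
    Tendsto (fun n => TA α (c n)) atTop (nhds α) := by
  obtain ⟨hC1, hbA, hbB, lam, hlam0, hlam1, hC3⟩ := hCEF
  set D := setDist A B with hD
  set iA := ⨅ c, fA c with hiA
  set iB := ⨅ c, fB c with hiB
  have hfAge : ∀ d, iA ≤ fA d := fun d => ciInf_le hbA d
  have hfBge : ∀ d, iB ≤ fB d := fun d => ciInf_le hbB d
  have hDle : ∀ a ∈ A, ∀ b ∈ B, D ≤ dist a b := by
    intro a ha b hb
    refine csInf_le ⟨0, ?_⟩ ⟨a, ha, b, hb, rfl⟩
    rintro d ⟨p, hp, q', hq', rfl⟩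
    exact dist_nonneg
  set y : ℕ → X := fun m => (iterSeq TB HB (y₀, v₀) m).1 with hydef
  set v : ℕ → C := fun m => (iterSeq TB HB (y₀, v₀) m).2 with hvdef
  have hx1 : ∀ n, x n = (iterSeq TA HA (x₀, u₀) n).1 := fun n => congrArg Prod.fst (hxu n)
  have hu1 : ∀ n, u n = (iterSeq TA HA (x₀, u₀) n).2 := fun n => congrArg Prod.snd (hxu n)
  have hxs : ∀ n, x (n + 1) = TA (x n) (u n) := by
    intro n; simp only [hx1, hu1]; rfl
  have hus : ∀ n, u (n + 1) = HA (x n) (u n) := by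
    intro n; simp only [hx1, hu1]; rfl
  have hys : ∀ m, y (m + 1) = TB (y m) (v m) := fun m => rfl
  have hvs : ∀ m, v (m + 1) = HB (y m) (v m) := fun m => rfl
  have hPxy : ∀ n m, (x n, y m, u n, v m) ∈ P := by
    intro n m
    have h := hC1 (x₀, y₀, u₀, v₀) hq n m
    rw [hx1, hu1]; exact h
  have hPαy : ∀ n m, (α, y m, c n, v m) ∈ P := fun n m => hC1 (α, y₀, c n, v₀) (hc.2 n) 0 m
  have hPTy : ∀ n m, (TA α (c n), y m, HA α (c n), v m) ∈ P := fun n m =>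
    hC1 (α, y₀, c n, v₀) (hc.2 n) 1 m
  have hxA : ∀ n, x n ∈ A := fun n => (hP _ (hPxy n 0)).1
  have hyB : ∀ m, y m ∈ B := fun m => (hP _ (hPxy 0 m)).2
  have hαA : α ∈ A := (hP _ (hc.2 0)).1
  have hTαA : ∀ n, TA α (c n) ∈ A := fun n => hTA α hαA (c n)
  have hstep : ∀ q ∈ P,
      dist (TA q.1 q.2.2.1) (TB q.2.1 q.2.2.2) + fA (HA q.1 q.2.2.1)
        + fB (HB q.2.1 q.2.2.2) - (D + iA + iB) ≤
      lam * (dist q.1 q.2.1 + fA q.2.2.1 + fB q.2.2.2 - (D + iA + iB)) := by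
    intro q hq'
    have h := hC3 q hq'
    nlinarith [h]
  set g : ℕ → ℕ → ℝ :=
    fun n m => dist (x n) (y m) + fA (u n) + fB (v m) - (D + iA + iB) with hgdef
  have hgval : ∀ n m, g n m = dist (x n) (y m) + fA (u n) + fB (v m) - (D + iA + iB) :=
    fun n m => rfl
  have hg0 : ∀ n m, 0 ≤ g n m := by
    intro n m
    have h1 := hDle _ (hxA n) _ (hyB m)
    have h2 := hfAge (u n)
    have h3 := hfBge (v m)
    linarith [hgval n m]
  have hg1 : ∀ n m, g (n + 1) (m + 1) ≤ lam * g n m := by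
    intro n m
    have h := hstep (x n, y m, u n, v m) (hPxy n m)
    rw [hgval, hgval, hxs n, hus n, hys m, hvs m]
    exact h
  have hgk : ∀ k n m, g (n + k) (m + k) ≤ lam ^ k * g n m := by
    intro k
    induction k with
    | zero => intro n m; simp
    | succ k ih =>
      intro n m
      have e1 : n + (k + 1) = (n + k) + 1 := by omega
      have e2 : m + (k + 1) = (m + k) + 1 := by omega
      rw [e1, e2]
      calc g ((n + k) + 1) ((m + k) + 1) ≤ lam * g (n + k) (m + k) := hg1 _ _
        _ ≤ lam * (lam ^ k * g n m) := mul_le_mul_of_nonneg_left (ih n m) hlam0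
        _ = lam ^ (k + 1) * g n m := by ring
  obtain ⟨M, hM⟩ : ∃ M, ∀ n, dist (x 0) (x n) ≤ M := by
    have ht : Tendsto (fun n => dist (x 0) (x n)) atTop (nhds (dist (x 0) α)) :=
      tendsto_const_nhds.dist hα
    obtain ⟨M, hM⟩ := ht.bddAbove_range
    exact ⟨M, fun n => hM ⟨n, rfl⟩⟩
  have hpowle : ∀ k : ℕ, lam ^ k ≤ 1 := fun k => pow_le_one₀ hlam0 hlam1.le
  have hgkk : ∀ k, g k k ≤ g 0 0 := by
    intro k
    have h := hgk k 0 0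
    simp only [Nat.zero_add] at h
    exact h.trans (mul_le_of_le_one_left (hg0 0 0) (hpowle k))
  have hfAub : ∀ n, fA (u n) - iA ≤ g n n := by
    intro n
    have h1 := hDle _ (hxA n) _ (hyB n)
    have h3 := hfBge (v n)
    linarith [hgval n n]
  have hGb : ∀ n m, g n m ≤ M + 2 * g 0 0 + (fA (u 0) - iA) := by
    intro n m
    rcases le_total n m with hnm | hnm
    · have h := hgk n 0 (m - n)
      rw [Nat.zero_add, Nat.sub_add_cancel hnm] at h
      have h2 : g 0 (m - n) ≤ M + g 0 0 + (fA (u 0) - iA) := by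
        have t1 : dist (x 0) (y (m - n)) ≤ dist (x 0) (x (m - n)) + dist (x (m - n)) (y (m - n)) :=
          dist_triangle _ _ _
        have t2 := hM (m - n)
        have t3 := hgkk (m - n)
        have t4 := hfAge (u (m - n))
        linarith [hgval 0 (m - n), hgval (m - n) (m - n)]
      have h3 : g n m ≤ g 0 (m - n) :=
        h.trans (mul_le_of_le_one_left (hg0 _ _) (hpowle n))
      linarith [hg0 0 0]
    · have h := hgk m (n - m) 0
      rw [Nat.zero_add, Nat.sub_add_cancel hnm] at h
      have h2 : g (n - m) 0 ≤ M + 2 * g 0 0 + (fA (u 0) - iA) := by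
        have t1 : dist (x (n - m)) (y 0) ≤ dist (x 0) (x (n - m)) + dist (x 0) (y 0) :=
          dist_triangle_left _ _ _
        have t2 := hM (n - m)
        have t3 := hgkk (n - m)
        have t4 := hfAub (n - m)
        have t5 := hfAge (u 0)
        linarith [hgval (n - m) 0, hgval 0 0]
      exact (h.trans (mul_le_of_le_one_left (hg0 _ _) (hpowle m))).trans h2
  set G : ℝ := M + 2 * g 0 0 + (fA (u 0) - iA) with hGdef
  have hG0 : 0 ≤ G := le_trans (hg0 0 0) (hGb 0 0)
  have hUnif : ∀ k n m, k ≤ n → k ≤ m → g n m ≤ lam ^ k * G := by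
    intro k n m hn hm
    have h := hgk k (n - k) (m - k)
    rw [Nat.sub_add_cancel hn, Nat.sub_add_cancel hm] at h
    exact h.trans (mul_le_mul_of_nonneg_left (hGb _ _) (pow_nonneg hlam0 k))
  have hdxy : ∀ k n m, k ≤ n → k ≤ m → dist (x n) (y m) ≤ D + lam ^ k * G := by
    intro k n m hn hm
    have h := hUnif k n m hn hm
    have h2 := hfAge (u n)
    have h3 := hfBge (v m)
    linarith [hgval n m]
  have hαy : ∀ k m, k ≤ m → dist α (y m) ≤ D + lam ^ k * G := by
    intro k m hm
    have ht : Tendsto (fun n => dist (x n) (y m)) atTop (nhds (dist α (y m))) :=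
      hα.dist tendsto_const_nhds
    exact le_of_tendsto ht (Filter.eventually_atTop.2 ⟨k, fun n hn => hdxy k n m hn hm⟩)
  have hfBv : ∀ m, fB (v m) ≤ iB + lam ^ m * G := by
    intro m
    have h := hUnif m m m le_rfl le_rfl
    have h1 := hDle _ (hxA m) _ (hyB m)
    have h2 := hfAge (u m)
    linarith [hgval m m]
  have hfAu : ∀ n, fA (u n) ≤ iA + lam ^ n * G := by
    intro n
    have h := hUnif n n n le_rfl le_rfl
    have h1 := hDle _ (hxA n) _ (hyB n)
    have h2 := hfBge (v n)
    linarith [hgval n n]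
  have hkey : ∀ n m, dist (TA α (c n)) (y (m + 1)) + fA (HA α (c n)) ≤ D + iA +
      lam * ((dist α (y m) - D) + (fA (c n) - iA) + (fB (v m) - iB)) := by
    intro n m
    have h := hstep (α, y m, c n, v m) (hPαy n m)
    rw [show TB (y m) (v m) = y (m + 1) from rfl] at h
    have h3 := hfBge (HB (y m) (v m))
    nlinarith [h]
  have hkey0 : ∀ n m, 0 ≤ (dist α (y m) - D) + (fA (c n) - iA) + (fB (v m) - iB) := by
    intro n m
    have h1 := hDle _ hαA _ (hyB m)
    have h2 := hfAge (c n)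
    have h3 := hfBge (v m)
    linarith
  have hTAd : ∀ n m, dist (TA α (c n)) (y (m + 1)) ≤
      D + ((dist α (y m) - D) + (fA (c n) - iA) + (fB (v m) - iB)) := by
    intro n m
    have h := hkey n m
    have h2 := hfAge (HA α (c n))
    have h3 : lam * ((dist α (y m) - D) + (fA (c n) - iA) + (fB (v m) - iB)) ≤
        (dist α (y m) - D) + (fA (c n) - iA) + (fB (v m) - iB) :=
      mul_le_of_le_one_left (hkey0 n m) hlam1.le
    linarith
  have hHAc : ∀ n m, fA (HA α (c n)) ≤
      iA + ((dist α (y m) - D) + (fA (c n) - iA) + (fB (v m) - iB)) := by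
    intro n m
    have h := hkey n m
    have h2 := hDle _ (hTαA n) _ (hyB (m + 1))
    have h3 : lam * ((dist α (y m) - D) + (fA (c n) - iA) + (fB (v m) - iB)) ≤
        (dist α (y m) - D) + (fA (c n) - iA) + (fB (v m) - iB) :=
      mul_le_of_le_one_left (hkey0 n m) hlam1.le
    linarith
  have hpow : Tendsto (fun j : ℕ => lam ^ j * G) atTop (nhds 0) := by
    simpa using (tendsto_pow_atTop_nhds_zero_of_lt_one hlam0 hlam1).mul_const G
  have hcn : Tendsto (fun n => fA (c n)) atTop (nhds iA) := hc.1
  -- the interleaved sequences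
  set w : ℕ → X := fun j => if j % 2 = 0 then x (j / 2) else TA α (c (j / 2)) with hwdef
  set U : ℕ → C := fun j => if j % 2 = 0 then u (j / 2) else HA α (c (j / 2)) with hUdef
  have hwA : ∀ j, w j ∈ A := by
    intro j
    simp only [hwdef]
    split_ifs with h
    · exact hxA _
    · exact hTαA _
  have hPw : ∀ j m, (w j, y m, U j, v m) ∈ P := by
    intro j m
    simp only [hwdef, hUdef]
    split_ifs with h
    · exact hPxy _ _
    · exact hPTy _ _
  have hfAU : Tendsto (fun j => fA (U j)) atTop (nhds iA) := by
    rw [Metric.tendsto_atTop]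
    intro ε hε
    obtain ⟨N₁, hN₁⟩ := (Metric.tendsto_atTop.1 hpow) (ε / 4) (by linarith)
    obtain ⟨N₂, hN₂⟩ := (Metric.tendsto_atTop.1 hcn) (ε / 4) (by linarith)
    have hp1 : ∀ t, N₁ ≤ t → lam ^ t * G < ε / 4 := by
      intro t ht
      have := hN₁ t ht
      rw [Real.dist_eq, sub_zero] at this
      exact lt_of_abs_lt this
    have hp2 : ∀ n, N₂ ≤ n → fA (c n) - iA < ε / 4 := by
      intro n hn
      have := hN₂ n hn
      rw [Real.dist_eq] at this
      exact lt_of_abs_lt this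
    refine ⟨2 * (N₁ + N₂) + 2, fun j hj => ?_⟩
    have hj1 : N₁ ≤ j / 2 := by omega
    have hj2 : N₂ ≤ j / 2 := by omega
    simp only [hUdef]
    split_ifs with hpar
    · have h1 := hfAu (j / 2)
      have h2 := hfAge (u (j / 2))
      have h3 := hp1 (j / 2) hj1
      rw [Real.dist_eq]
      exact abs_lt.2 ⟨by linarith, by linarith⟩
    · have h1 := hHAc (j / 2) (j / 2)
      have h2 := hfAge (HA α (c (j / 2)))
      have h3 := hαy (j / 2) (j / 2) le_rfl
      have h4 := hfBv (j / 2)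
      have h5 := hp1 (j / 2) hj1
      have h6 := hp2 (j / 2) hj2
      rw [Real.dist_eq]
      exact abs_lt.2 ⟨by linarith, by linarith⟩
  have hfBV : Tendsto (fun m => fB (v m)) atTop (nhds iB) := by
    have hup : Tendsto (fun m : ℕ => iB + lam ^ m * G) atTop (nhds iB) := by
      simpa using hpow.const_add iB
    exact tendsto_of_tendsto_of_tendsto_of_le_of_le tendsto_const_nhds hup
      (fun m => hfBge (v m)) (fun m => hfBv m)
  have hsup : Tendsto (supDist w y) atTop (nhds D) := by
    rw [Metric.tendsto_atTop]
    intro ε hε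
    obtain ⟨N₁, hN₁⟩ := (Metric.tendsto_atTop.1 hpow) (ε / 8) (by linarith)
    obtain ⟨N₂, hN₂⟩ := (Metric.tendsto_atTop.1 hcn) (ε / 8) (by linarith)
    have hp1 : ∀ t, N₁ ≤ t → lam ^ t * G < ε / 8 := by
      intro t ht
      have := hN₁ t ht
      rw [Real.dist_eq, sub_zero] at this
      exact lt_of_abs_lt this
    have hp2 : ∀ n, N₂ ≤ n → fA (c n) - iA < ε / 8 := by
      intro n hn
      have := hN₂ n hn
      rw [Real.dist_eq] at this
      exact lt_of_abs_lt this
    refine ⟨2 * (N₁ + N₂) + 2, fun k hk => ?_⟩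
    have hub : ∀ d ∈ {d : ℝ | ∃ n m, k ≤ n ∧ k ≤ m ∧ d = dist (w n) (y m)},
        d ≤ D + ε / 2 := by
      rintro d ⟨n, m, hn, hm, rfl⟩
      simp only [hwdef]
      split_ifs with hpar
      · have h := hdxy N₁ (n / 2) m (by omega) (by omega)
        have h2 := hp1 N₁ le_rfl
        linarith
      · obtain ⟨m', rfl⟩ : ∃ m', m = m' + 1 := ⟨m - 1, by omega⟩
        have h := hTAd (n / 2) m'
        have h3 := hαy N₁ m' (by omega)
        have h4 := hfBv m'
        have h5 := hp1 N₁ le_rfl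
        have h6 := hp1 m' (by omega)
        have h7 := hp2 (n / 2) (by omega)
        clear_value G g D iA iB w U y v
        linarith [h, h3, h4, h5, h6, h7]
    have hmem : dist (w k) (y k) ∈
        {d : ℝ | ∃ n m, k ≤ n ∧ k ≤ m ∧ d = dist (w n) (y m)} :=
      ⟨k, k, le_rfl, le_rfl, rfl⟩
    have hbdd : BddAbove {d : ℝ | ∃ n m, k ≤ n ∧ k ≤ m ∧ d = dist (w n) (y m)} :=
      ⟨D + ε / 2, hub⟩
    have hle : supDist w y k ≤ D + ε / 2 := csSup_le ⟨_, hmem⟩ hub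
    have hge : D ≤ supDist w y k :=
      le_trans (hDle _ (hwA k) _ (hyB k)) (le_csSup hbdd hmem)
    rw [Real.dist_eq]
    exact abs_lt.2 ⟨by linarith, by linarith⟩
  obtain ⟨a, haA, hwa⟩ := hCD w y U v hwA hyB hsup hPw hfAU hfBV
  have h2n : Tendsto (fun n : ℕ => 2 * n) atTop atTop :=
    tendsto_atTop_atTop.2 fun b => ⟨b, fun a' ha' => by omega⟩
  have h2n1 : Tendsto (fun n : ℕ => 2 * n + 1) atTop atTop :=
    tendsto_atTop_atTop.2 fun b => ⟨b, fun a' ha' => by omega⟩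
  have hweven : ∀ n, w (2 * n) = x n := by
    intro n
    simp only [hwdef]
    rw [if_pos (by omega : 2 * n % 2 = 0), show 2 * n / 2 = n by omega]
  have hwodd : ∀ n, w (2 * n + 1) = TA α (c n) := by
    intro n
    simp only [hwdef]
    rw [if_neg (by omega : ¬ (2 * n + 1) % 2 = 0), show (2 * n + 1) / 2 = n by omega]
  have hxa : Tendsto x atTop (nhds a) := by
    have h := hwa.comp h2n
    rw [show (w ∘ fun n : ℕ => 2 * n) = x from funext fun n => hweven n] at h
    exact h
  have haα : a = α := tendsto_nhds_unique hxa hα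
  have h := hwa.comp h2n1
  rw [haα] at h
  rw [show (w ∘ fun n : ℕ => 2 * n + 1) = fun n => TA α (c n) from
    funext fun n => hwodd n] at h
  exact h
end

section
/- In the CEF setting (without assuming the CD property): let α ∈ A satisfy lim_{n→∞} T_A(α, c_n) = α, where {c_n} ∈ IS_{f_A}^P(α, y₀, v₀) for some (y₀, v₀) ∈ B × C, and let {y_n}, {v_n} be the iterated sequences of (T_B, H_B) with initial guess (y₀, v₀). Then lim_{n→∞} ρ(y_n, α) = dist(A, B). -/
open Filter

theorem stmt_12 {X C : Type*} [MetricSpace X] [Nonempty C] (A B : Set X)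
    (P : Set (X × X × C × C)) (TA TB : X → C → X) (HA HB : X → C → C) (fA fB : C → ℝ)
    (hP : ∀ q ∈ P, q.1 ∈ A ∧ q.2.1 ∈ B)
    (hTA : ∀ x ∈ A, ∀ c, TA x c ∈ A) (hTB : ∀ y ∈ B, ∀ c, TB y c ∈ B)
    (hCEF : CEF A B P TA TB HA HB fA fB)
    (α : X) (hαA : α ∈ A) (y₀ : X) (v₀ : C) (hy₀ : y₀ ∈ B)
    (c : ℕ → C) (hc : ISseq P fA α y₀ v₀ c)
    (hfix : Tendsto (fun n => TA α (c n)) atTop (nhds α))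
    (y : ℕ → X) (v : ℕ → C)
    (hyv : ∀ n, (y n, v n) = iterSeq TB HB (y₀, v₀) n) :
    Tendsto (fun n => dist (y n) α) atTop (nhds (setDist A B)) := by
  obtain ⟨hC1, hbA, hbB, lam, hlam0, hlam1, hC3⟩ := hCEF
  set d := setDist A B with hd
  set iA := ⨅ c, fA c with hiA
  set iB := ⨅ c, fB c with hiB
  -- membership of the iterated sequence in B
  have hyB : ∀ n, y n ∈ B := by
    intro n
    have hiter : ∀ k, (iterSeq TB HB (y₀, v₀) k).1 ∈ B := by
      intro k
      induction k with
      | zero => exact hy₀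
      | succ k ih => exact hTB _ ih _
    have h := hiter n
    rw [← hyv n] at h
    exact h
  -- recursion for y, v
  have hstep : ∀ m, y (m+1) = TB (y m) (v m) ∧ v (m+1) = HB (y m) (v m) := by
    intro m
    have h1 := hyv (m+1)
    have h2 := hyv m
    rw [show iterSeq TB HB (y₀, v₀) (m+1) =
        (TB (iterSeq TB HB (y₀, v₀) m).1 (iterSeq TB HB (y₀, v₀) m).2,
         HB (iterSeq TB HB (y₀, v₀) m).1 (iterSeq TB HB (y₀, v₀) m).2) from rfl,
      ← h2] at h1
    exact ⟨congrArg Prod.fst h1, congrArg Prod.snd h1⟩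
  -- memberships in P
  have hmemP : ∀ n m, (α, y m, c n, v m) ∈ P := by
    intro n m
    have h0 := hC1 (α, y₀, c n, v₀) (hc.2 n) 0 m
    simp only [iterSeq] at h0
    rw [← hyv m] at h0
    exact h0
  have hdistge : ∀ m, d ≤ dist α (y m) := by
    intro m
    apply csInf_le
    · refine ⟨0, fun r hr => ?_⟩
      obtain ⟨x, _, b, _, rfl⟩ := hr
      exact dist_nonneg
    · exact ⟨α, hαA, y m, hyB m, rfl⟩
  have hfBge : ∀ m, iB ≤ fB (v m) := fun m => ciInf_le hbB (v m)
  set a : ℕ → ℝ := fun m => dist α (y m) + fB (v m) - (d + iB) with ha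
  have ha_nonneg : ∀ m, 0 ≤ a m := by
    intro m
    have h1 := hdistge m
    have h2 := hfBge m
    simp only [ha]
    linarith
  have hrec : ∀ m, a (m+1) ≤ lam * a m := by
    intro m
    obtain ⟨hy1, hv1⟩ := hstep m
    have key : ∀ n, dist (TA α (c n)) (y (m+1)) ≤
        lam * (dist α (y m) + fA (c n) + fB (v m)) + (1-lam)*(d+iA+iB)
          - iA - fB (v (m+1)) := by
      intro n
      have h3 := hC3 (α, y m, c n, v m) (hmemP n m)
      simp only at h3
      have hA : iA ≤ fA (HA α (c n)) := ciInf_le hbA _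
      rw [hy1, hv1]
      linarith
    have t1 : Tendsto (fun n => dist (TA α (c n)) (y (m+1))) atTop
        (nhds (dist α (y (m+1)))) := hfix.dist tendsto_const_nhds
    have t2 : Tendsto (fun n => lam * (dist α (y m) + fA (c n) + fB (v m))
        + (1-lam)*(d+iA+iB) - iA - fB (v (m+1))) atTop
        (nhds (lam * (dist α (y m) + iA + fB (v m)) + (1-lam)*(d+iA+iB)
          - iA - fB (v (m+1)))) := by
      exact (((((hc.1.const_add (dist α (y m))).add_const (fB (v m))).const_mul
        lam).add_const ((1-lam)*(d+iA+iB))).sub_const iA).sub_const (fB (v (m+1)))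
    have hle := le_of_tendsto_of_tendsto' t1 t2 key
    simp only [ha]
    linarith
  have hbound : ∀ m, a m ≤ lam ^ m * a 0 := by
    intro m
    induction m with
    | zero => simp
    | succ m ih =>
      calc a (m+1) ≤ lam * a m := hrec m
        _ ≤ lam * (lam ^ m * a 0) := mul_le_mul_of_nonneg_left ih hlam0
        _ = lam ^ (m+1) * a 0 := by ring
  have hpow : Tendsto (fun m => d + lam ^ m * a 0) atTop (nhds d) := by
    have := (tendsto_pow_atTop_nhds_zero_of_lt_one hlam0 hlam1).mul_const (a 0)
    simpa using this.const_add d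
  refine tendsto_of_tendsto_of_tendsto_of_le_of_le tendsto_const_nhds hpow
    (fun m => ?_) (fun m => ?_)
  · rw [dist_comm]; exact hdistge m
  · have h0 : dist α (y m) - d ≤ a m := by
      simp only [ha]
      linarith [hfBge m]
    have : dist α (y m) ≤ d + lam ^ m * a 0 := by linarith [hbound m]
    rwa [dist_comm]
end
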